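/- Let ν = 1 and fix λ > 0. Then lim_{t→∞} (t² / log t) · K_1(t;λ) = 2, where K_1(t;λ) = ∫_λ^t u^{-2} ((t+λ−u)^{-1} − t^{-1}) du. -/

import Mathlib

open Filter

/-- `K₁(t;λ) = ∫_λ^t u^{-(ν+1)} ((t+λ−u)^{-ν} − t^{-ν}) du`, here with `ν = 1`. -/
noncomputable def K₁ (ν t lam : ℝ) : ℝ :=
  ∫ u in lam..t, u ^ (-(ν + 1)) * ((t + lam - u) ^ (-ν) - t ^ (-ν))

open Topology

/- Partial fractions give an elementary antiderivative of the integrand, so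
`K₁(t;λ) = 2 (log t - log λ) / (t + λ)² - (t - λ) / (t² (t + λ))`.
After multiplying by `t² / log t` the first term tends to `2` and the second is `O(1 / log t)`. -/

theorem hasDerivAt_log_sub_log_div_sq_sub_div {s c u : ℝ} (hu : 0 < u) (hus : u < s) :
    HasDerivAt (fun x => (Real.log x - Real.log (s - x)) / s ^ 2 - (s⁻¹ - c) / x)
      ((u ^ 2)⁻¹ * ((s - u)⁻¹ - c)) u := by
  have hs : s ≠ 0 := by linarith
  have hsu : s - u ≠ 0 := by linarith
  have hlog_sub : HasDerivAt (fun x => Real.log (s - x)) ((s - u)⁻¹ * (-1)) u :=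
    (Real.hasDerivAt_log hsu).comp u ((hasDerivAt_id u).const_sub s)
  have h := (((Real.hasDerivAt_log hu.ne').sub hlog_sub).div_const (s ^ 2)).sub
    ((hasDerivAt_inv hu.ne').const_mul (s⁻¹ - c))
  refine (h.congr_deriv ?_).congr_of_eventuallyEq (Eventually.of_forall fun x => ?_)
  · field_simp
    ring
  · simp only [div_eq_mul_inv, Pi.sub_apply]

theorem K₁_one_eq_integral_inv (t lam : ℝ) :
    K₁ 1 t lam = ∫ u in lam..t, (u ^ 2)⁻¹ * ((t + lam - u)⁻¹ - t⁻¹) := by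
  refine intervalIntegral.integral_congr fun u _ => ?_
  simp only [show -((1 : ℝ) + 1) = ((-2 : ℤ) : ℝ) by norm_num, Real.rpow_intCast,
    Real.rpow_neg_one, zpow_neg]
  norm_cast

theorem K₁_one_eq {t lam : ℝ} (hlam : 0 < lam) (ht : lam < t) :
    K₁ 1 t lam =
      2 * (Real.log t - Real.log lam) / (t + lam) ^ 2 - (t - lam) / (t ^ 2 * (t + lam)) := by
  have ht0 : 0 < t := hlam.trans ht
  have hderiv : ∀ u ∈ Set.uIcc lam t, HasDerivAt
      (fun x => (Real.log x - Real.log (t + lam - x)) / (t + lam) ^ 2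
        - ((t + lam)⁻¹ - t⁻¹) / x)
      ((u ^ 2)⁻¹ * ((t + lam - u)⁻¹ - t⁻¹)) u := by
    intro u hu
    rw [Set.uIcc_of_le ht.le] at hu
    exact hasDerivAt_log_sub_log_div_sq_sub_div (hlam.trans_le hu.1) (by linarith [hu.2])
  have hcont :
      ContinuousOn (fun u : ℝ => (u ^ 2)⁻¹ * ((t + lam - u)⁻¹ - t⁻¹))
        (Set.uIcc lam t) := by
    rw [Set.uIcc_of_le ht.le]
    refine ContinuousOn.mul ?_ ?_
    · exact (continuousOn_pow 2).inv₀ fun u hu => pow_ne_zero 2 (hlam.trans_le hu.1).ne'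
    · refine ((continuousOn_const.sub continuousOn_id).inv₀ fun u hu => ?_).sub
        continuousOn_const
      exact (sub_pos.mpr (show id u < t + lam by simp only [id]; linarith [hu.2])).ne'
  rw [K₁_one_eq_integral_inv,
    intervalIntegral.integral_eq_sub_of_hasDerivAt hderiv hcont.intervalIntegrable,
    show t + lam - t = lam by ring, show t + lam - lam = t by ring]
  field_simp
  ring

theorem tendsto_add_const_div_add_const_atTop (a b : ℝ) :
    Tendsto (fun t : ℝ => (t + a) / (t + b)) atTop (𝓝 1) := by
  have h : Tendsto (fun t : ℝ => 1 + (a - b) / (t + b)) atTop (𝓝 (1 + 0)) :=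
    tendsto_const_nhds.add
      (tendsto_const_nhds.div_atTop (tendsto_atTop_add_const_right _ b tendsto_id))
  rw [add_zero] at h
  refine h.congr' ?_
  filter_upwards [eventually_gt_atTop (-b)] with t ht
  have htb : t + b ≠ 0 := by linarith
  field_simp
  ring

theorem stmt_19 (lam : ℝ) (hlam : 0 < lam) :
    Tendsto (fun t : ℝ => t ^ 2 / Real.log t * K₁ 1 t lam) atTop (nhds 2) := by
  have hinv_log : Tendsto (fun t => (Real.log t)⁻¹) atTop (𝓝 0) :=
    Real.tendsto_log_atTop.inv_tendsto_atTop
  have hlim : Tendsto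
      (fun t => 2 * (1 - Real.log lam * (Real.log t)⁻¹) * ((t + 0) / (t + lam)) ^ 2
      - (t + -lam) / (t + lam) * (Real.log t)⁻¹) atTop
      (𝓝 (2 * (1 - Real.log lam * 0) * 1 ^ 2 - 1 * 0)) :=
    (((tendsto_const_nhds.sub (tendsto_const_nhds.mul hinv_log)).const_mul 2).mul
      ((tendsto_add_const_div_add_const_atTop 0 lam).pow 2)).sub
      ((tendsto_add_const_div_add_const_atTop (-lam) lam).mul hinv_log)
  norm_num at hlim
  refine hlim.congr' ?_
  filter_upwards [eventually_gt_atTop lam, eventually_gt_atTop 1] with t ht ht1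
  have hlog : Real.log t ≠ 0 := (Real.log_pos ht1).ne'
  have hsum : t + lam ≠ 0 := by linarith
  rw [K₁_one_eq hlam ht]
  field_simp
  ring
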